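/- In model M, the normalized expectation converges: lim_{n→∞} E(W_n)/n = W_0·m·c/T_0. -/

import Mathlib

open Finset

/-- Total number of balls after `n` draws: `T_n = W_0 + B_0 + n·m·c`. -/
def urnT (W0 B0 m c n : ℕ) : ℕ := W0 + B0 + n * m * c

/-- Probability mass function of the number of white balls after `n` draws in the
Chen–Wei model `M` (at each step `m` balls are drawn without replacement and, for
each drawn ball, `c` balls of the same color are added). -/
noncomputable def massM (W0 B0 m c : ℕ) : ℕ → ℕ → ℝ
  | 0 => fun v => if v = W0 then 1 else 0
  | n + 1 => fun v =>
      ∑ w ∈ Finset.range (urnT W0 B0 m c n + 1), ∑ k ∈ Finset.range (m + 1),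
        if v = w + c * k then
          massM W0 B0 m c n w *
            ((Nat.choose w k * Nat.choose (urnT W0 B0 m c n - w) (m - k) : ℝ) /
              (Nat.choose (urnT W0 B0 m c n) m : ℝ))
        else 0

/-- The `s`-th moment `E(W_n^s)` of the number of white balls in model `M`. -/
noncomputable def momM (W0 B0 m c s n : ℕ) : ℝ :=
  ∑ w ∈ Finset.range (urnT W0 B0 m c n + 1), massM W0 B0 m c n w * (w : ℝ) ^ s

/-!
Conditionally on `W_n = w`, the number of white balls among the `m` drawn is hypergeometric
with mean `m w / T_n`, so `E(W_{n+1} | W_n) = W_n (T_n + m c) / T_n = W_n T_{n+1} / T_n`.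
Hence `E(W_n) / T_n` is constant, `E(W_n) = W_0 T_n / T_0`, and `T_n / n → m c`.
-/

theorem sum_range_choose_mul_choose (w r m : ℕ) :
    ∑ k ∈ range (m + 1), w.choose k * r.choose (m - k) = (w + r).choose m := by
  rw [Nat.add_choose_eq, Nat.sum_antidiagonal_eq_sum_range_succ_mk]

theorem add_mul_sum_range_mul_choose_mul_choose (w r m : ℕ) :
    (w + r) * ∑ k ∈ range (m + 1), k * (w.choose k * r.choose (m - k))
      = m * w * (w + r).choose m := by
  obtain _ | w := w
  · rw [sum_eq_zero fun k _ => by cases k <;> simp]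
    simp
  obtain _ | m := m
  · simp
  -- `(k + 1) * C(w + 1, k + 1) = (w + 1) * C(w, k)` turns the sum into a Vandermonde sum
  have hsum : ∑ k ∈ range (m + 1 + 1), k * ((w + 1).choose k * r.choose (m + 1 - k))
      = (w + 1) * (w + r).choose m := by
    rw [sum_range_succ', zero_mul, add_zero, ← sum_range_choose_mul_choose, mul_sum]
    refine sum_congr rfl fun k _ => ?_
    rw [Nat.add_sub_add_right, ← mul_assoc, mul_comm (k + 1), ← Nat.add_one_mul_choose_eq]
    ring
  rw [hsum]
  have hT := Nat.add_one_mul_choose_eq (w + r) m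
  rw [show w + 1 + r = w + r + 1 by ring]
  calc (w + r + 1) * ((w + 1) * (w + r).choose m)
      = (w + 1) * ((w + r + 1) * (w + r).choose m) := by ring
    _ = (m + 1) * (w + 1) * (w + r + 1).choose (m + 1) := by rw [hT]; ring

theorem sum_range_hypergeometric_mul_add (w r m c : ℕ) (hmT : m ≤ w + r) (hT : 0 < w + r) :
    ∑ k ∈ range (m + 1),
        ((w.choose k * r.choose (m - k) : ℝ) / ((w + r).choose m : ℝ)) * ((w : ℝ) + c * k)
      = w * ((w + r : ℕ) + m * c) / (w + r : ℕ) := by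
  have hvand : ∑ k ∈ range (m + 1), (w.choose k * r.choose (m - k) : ℝ) = (w + r).choose m := by
    exact_mod_cast sum_range_choose_mul_choose w r m
  have hmean : ((w + r : ℕ) : ℝ) * ∑ k ∈ range (m + 1), (k * (w.choose k * r.choose (m - k)) : ℝ)
      = m * w * (w + r).choose m := by
    exact_mod_cast add_mul_sum_range_mul_choose_mul_choose w r m
  have hC : ((w + r).choose m : ℝ) ≠ 0 := by exact_mod_cast (Nat.choose_pos hmT).ne'
  have hT' : ((w + r : ℕ) : ℝ) ≠ 0 := by exact_mod_cast hT.ne'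
  have hsplit : ∑ k ∈ range (m + 1),
        ((w.choose k * r.choose (m - k) : ℝ) / ((w + r).choose m : ℝ)) * ((w : ℝ) + c * k)
      = (w * ∑ k ∈ range (m + 1), (w.choose k * r.choose (m - k) : ℝ)
          + c * ∑ k ∈ range (m + 1), (k * (w.choose k * r.choose (m - k)) : ℝ))
        / ((w + r).choose m : ℝ) := by
    rw [mul_sum, mul_sum, ← sum_add_distrib, sum_div]
    exact sum_congr rfl fun k _ => by ring
  rw [hsplit, hvand, div_eq_div_iff hC hT']
  linear_combination c * hmean

theorem sum_massM_succ_mul (W0 B0 m c n : ℕ) (f : ℕ → ℝ) :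
    ∑ v ∈ range (urnT W0 B0 m c (n + 1) + 1), massM W0 B0 m c (n + 1) v * f v
      = ∑ w ∈ range (urnT W0 B0 m c n + 1), massM W0 B0 m c n w *
          ∑ k ∈ range (m + 1),
            ((w.choose k * (urnT W0 B0 m c n - w).choose (m - k) : ℝ)
              / ((urnT W0 B0 m c n).choose m : ℝ)) * f (w + c * k) := by
  simp only [massM, sum_mul, ite_mul, zero_mul]
  rw [sum_comm]
  refine sum_congr rfl fun w hw => ?_
  rw [sum_comm, mul_sum]
  refine sum_congr rfl fun k hk => ?_
  have hvk : w + c * k < urnT W0 B0 m c (n + 1) + 1 := by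
    have := Nat.mul_le_mul_left c (mem_range_succ_iff.mp hk)
    simp only [mem_range_succ_iff, urnT] at hw ⊢
    nlinarith
  rw [sum_ite_eq', if_pos (mem_range.mpr hvk), mul_assoc]

theorem momM_zero (W0 B0 m c s : ℕ) : momM W0 B0 m c s 0 = (W0 : ℝ) ^ s := by
  simp [momM, massM, urnT]

theorem momM_one_succ (W0 B0 m c n : ℕ) (hmT : m ≤ W0 + B0) (hT : 0 < W0 + B0) :
    momM W0 B0 m c 1 (n + 1)
      = momM W0 B0 m c 1 n * ((urnT W0 B0 m c n : ℝ) + m * c) / urnT W0 B0 m c n := by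
  have hTn : W0 + B0 ≤ urnT W0 B0 m c n := Nat.le_add_right _ _
  rw [momM, sum_massM_succ_mul, momM, sum_mul, sum_div]
  refine sum_congr rfl fun w hw => ?_
  have hwT := Nat.add_sub_cancel' (mem_range_succ_iff.mp hw)
  have hmean := sum_range_hypergeometric_mul_add w (urnT W0 B0 m c n - w) m c
    (by omega) (by omega)
  rw [hwT] at hmean
  push_cast
  simp only [pow_one, hmean]
  ring

theorem momM_one_eq (W0 B0 m c n : ℕ) (hmT : m ≤ W0 + B0) (hT : 0 < W0 + B0) :
    momM W0 B0 m c 1 n = W0 * (urnT W0 B0 m c n : ℝ) / (W0 + B0 : ℕ) := by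
  have hT' : ((W0 + B0 : ℕ) : ℝ) ≠ 0 := by exact_mod_cast hT.ne'
  induction n with
  | zero => rw [momM_zero, pow_one, urnT]; field_simp; simp
  | succ n ih =>
    have hTn : (urnT W0 B0 m c n : ℝ) ≠ 0 := by
      exact_mod_cast (hT.trans_le (Nat.le_add_right _ _)).ne'
    have hnext : (urnT W0 B0 m c (n + 1) : ℝ) = urnT W0 B0 m c n + m * c := by
      simp only [urnT]; push_cast; ring
    rw [momM_one_succ W0 B0 m c n hmT hT, ih, hnext]
    field_simp

theorem modelM_expectation_limit_general (W0 B0 m c : ℕ) (hm : 1 ≤ m)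
    (hT0 : m ≤ W0 + B0) :
    Filter.Tendsto (fun n : ℕ => momM W0 B0 m c 1 n / (n : ℝ)) Filter.atTop
      (nhds ((W0 : ℝ) * m * c / ((W0 : ℝ) + B0))) := by
  have hT : 0 < W0 + B0 := hm.trans hT0
  have hlim : Filter.Tendsto (fun n : ℕ => (W0 : ℝ) * m * c / ((W0 : ℝ) + B0) + W0 / (n : ℝ))
      Filter.atTop (nhds ((W0 : ℝ) * m * c / ((W0 : ℝ) + B0))) := by
    simpa using tendsto_const_nhds.add (tendsto_const_div_atTop_nhds_zero_nat (W0 : ℝ))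
  refine hlim.congr' ?_
  filter_upwards [Filter.eventually_ne_atTop 0] with n hn
  have hT' : (W0 : ℝ) + B0 ≠ 0 := by exact_mod_cast hT.ne'
  rw [momM_one_eq W0 B0 m c n hT0 hT, urnT]
  push_cast
  field_simp
  ring

/-- In model `M`, the normalized expectation converges:
`lim_{n→∞} E(W_n)/n = W_0·m·c/T_0`. -/
theorem modelM_expectation_limit (W0 B0 m c : ℕ) (hm : 1 ≤ m) (hc : 1 ≤ c)
    (hW0 : 1 ≤ W0) (hB0 : 1 ≤ B0) (hT0 : m ≤ W0 + B0) :
    Filter.Tendsto (fun n : ℕ => momM W0 B0 m c 1 n / (n : ℝ)) Filter.atTop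
      (nhds ((W0 : ℝ) * m * c / ((W0 : ℝ) + B0))) :=
  modelM_expectation_limit_general W0 B0 m c hm hT0
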